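/- arXiv:1111.1651 — 2 statements merged into one kernel-verified Lean document; each statement's English description precedes it below -/
import Mathlib

section
/- Let Q be a set of nodes of an imprecise terrain and let P ⊆ WS(R⁻, Q), where R⁻ is the lowermost realization. Then PoWS(P) ⊆ PoWS(Q). -/
open scoped Classical
open Set

/-- An imprecise terrain: a finite geometric graph with nodes in the plane,
each node carrying an elevation interval `[low v, high v]`. -/
structure ImpTerrain (V : Type) [Fintype V] [DecidableEq V] where
  pos : V → ℝ × ℝ
  posInj : Function.Injective pos
  adj : V → V → Prop
  adj_symm : ∀ u v, adj u v → adj v u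
  adj_irrefl : ∀ v, ¬ adj v v
  low : V → ℝ
  high : V → ℝ

namespace ImpTerrain

variable {V : Type} [Fintype V] [DecidableEq V]

/-- A realization assigns to each node an elevation within its interval. -/
def IsRealization (T : ImpTerrain V) (R : V → ℝ) : Prop :=
  ∀ v, T.low v ≤ R v ∧ R v ≤ T.high v

/-- Horizontal (plane) distance between two nodes. -/
noncomputable def hdist (T : ImpTerrain V) (u v : V) : ℝ := dist (T.pos u) (T.pos v)

/-- Slope (steepness of descent) of the edge from `p` to `q` in realization `R`. -/
noncomputable def slope (T : ImpTerrain V) (R : V → ℝ) (p q : V) : ℝ :=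
  (R p - R q) / T.hdist p q

/-- `q` is a steepest-descent neighbor of `p` in `R`. -/
def SDN (T : ImpTerrain V) (R : V → ℝ) (p q : V) : Prop :=
  T.adj p q ∧ 0 ≤ T.slope R p q ∧ ∀ r, T.adj p r → T.slope R p r ≤ T.slope R p q

/-- The neighborhood of a set of nodes. -/
def Nbhd (T : ImpTerrain V) (P : Set V) : Set V :=
  {s | s ∉ P ∧ ∃ t ∈ P, T.adj s t}

/-- `u` and `v` are connected by a path staying inside `P`. -/
def ConnIn (T : ImpTerrain V) (P : Set V) (u v : V) : Prop :=
  Relation.ReflTransGen (fun a b => T.adj a b ∧ a ∈ P ∧ b ∈ P) u v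

/-- `P` is a local minimum in realization `R`: nonempty, connected, all nodes at
the same elevation, strictly below its neighborhood. -/
def LocalMin (T : ImpTerrain V) (R : V → ℝ) (P : Set V) : Prop :=
  P.Nonempty ∧ (∀ u ∈ P, ∀ v ∈ P, T.ConnIn P u v) ∧
    (∀ u ∈ P, ∀ v ∈ P, R u = R v) ∧ (∀ u ∈ P, ∀ t ∈ T.Nbhd P, R u < R t)

def InLocalMin (T : ImpTerrain V) (R : V → ℝ) (p : V) : Prop :=
  ∃ P, T.LocalMin R P ∧ p ∈ P

/-- One step of discrete water flow. -/
def FlowStep (T : ImpTerrain V) (R : V → ℝ) (p q : V) : Prop :=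
  (∃ P, T.LocalMin R P ∧ p ∈ P ∧ q ∈ P ∧ T.adj p q) ∨
    (¬ T.InLocalMin R p ∧ T.SDN R p q)

/-- `p ⇝_R q` : water from `p` reaches `q` in realization `R`. -/
def FlowsTo (T : ImpTerrain V) (R : V → ℝ) : V → V → Prop :=
  Relation.ReflTransGen (T.FlowStep R)

/-- The (discrete) watershed of a set of nodes `Q` in realization `R`. -/
def WS (T : ImpTerrain V) (R : V → ℝ) (Q : Set V) : Set V :=
  {p | ∃ q ∈ Q, T.FlowsTo R p q}

/-- The potential watershed of `Q`. -/
def PoWS (T : ImpTerrain V) (Q : Set V) : Set V :=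
  {p | ∃ R, T.IsRealization R ∧ p ∈ T.WS R Q}

/-- A flow path: a simple path following steepest-descent edges that ends in,
and visits all nodes of, a local minimum. -/
def IsFlowPath (T : ImpTerrain V) (R : V → ℝ) (L : List V) : Prop :=
  L.Nodup ∧ L.Chain' (fun p q => T.SDN R p q) ∧
    ∃ P, T.LocalMin R P ∧ (∀ v ∈ P, v ∈ L) ∧ ∃ hne : L ≠ [], L.getLast hne ∈ P

/-- The `Q`-avoiding potential watershed of `S`: nodes having, in some
realization, a flow path to a node of `S` whose portion up to that node
avoids `Q`. -/
def AvWS (T : ImpTerrain V) (Q S : Set V) : Set V :=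
  {p | ∃ R, T.IsRealization R ∧ ∃ L, T.IsFlowPath R L ∧ ∃ s ∈ S,
    ∃ i j : Fin L.length, (i : ℕ) ≤ (j : ℕ) ∧ L.get i = p ∧ L.get j = s ∧
      ∀ k : Fin L.length, (i : ℕ) ≤ (k : ℕ) → (k : ℕ) ≤ (j : ℕ) → L.get k ∉ Q}

/-- The persistent watershed of `Q`. -/
def PsWS (T : ImpTerrain V) (Q : Set V) : Set V :=
  (T.AvWS Q (T.PoWS Q)ᶜ)ᶜ

/-- The core watershed of `Q`: nodes from which every induced flow path leads
to a node of `Q`. -/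
def CoWS (T : ImpTerrain V) (Q : Set V) : Set V :=
  {p | ∀ R, T.IsRealization R → ∀ L, T.IsFlowPath R L →
    ∀ i : Fin L.length, L.get i = p →
      ∃ q ∈ Q, ∃ j : Fin L.length, (i : ℕ) ≤ (j : ℕ) ∧ L.get j = q}

/-- Union of all node sets disjoint from `Q` that form a local minimum in some
realization. -/
def Vmin (T : ImpTerrain V) (Q : Set V) : Set V :=
  ⋃₀ {r | r ∩ Q = ∅ ∧ ∃ R, T.IsRealization R ∧ T.LocalMin R r}

/-- `S` contains a local minimum in every realization. -/
def AlwaysMin (T : ImpTerrain V) (S : Set V) : Prop :=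
  ∀ R, T.IsRealization R → ∃ P, T.LocalMin R P ∧ P ⊆ S

/-- An imprecise minimum: a minimal set containing a local minimum in every
realization. -/
def ImpreciseMin (T : ImpTerrain V) (S : Set V) : Prop :=
  T.AlwaysMin S ∧ ∀ S', S' ⊂ S → ¬ T.AlwaysMin S'

/-- A terrain is regular if every local minimum of the lowermost realization is
an imprecise minimum. -/
def Regular (T : ImpTerrain V) : Prop :=
  ∀ P, T.LocalMin T.low P → T.ImpreciseMin P

/-- A proxy of `S`: a node of `S` from which water can never reach a node
outside `S` in any realization. -/
def IsProxy (T : ImpTerrain V) (S : Set V) (p : V) : Prop :=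
  p ∈ S ∧ ∀ R, T.IsRealization R → ∀ q, q ∉ S → ¬ T.FlowsTo R p q

/-- `R'` is an `ε`-perturbation of `R`. -/
def Perturb (ε : ℝ) (R R' : V → ℝ) : Prop := ∀ v, |R' v - R v| ≤ ε

/-- `S` together with all `ε`-perturbations of its members (`S^ε`). -/
def Enlarge (S : Set (V → ℝ)) (ε : ℝ) : Set (V → ℝ) :=
  S ∪ {R' | ∃ R ∈ S, Perturb ε R R'}

/-- `Π(S)` : flow paths induced by realizations in `S`. -/
def FlowPathsOf (T : ImpTerrain V) (S : Set (V → ℝ)) : Set (List V) :=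
  {L | ∃ R ∈ S, T.IsFlowPath R L}

/-- A flow path is stable with respect to `S`. -/
def StableWrt (T : ImpTerrain V) (S : Set (V → ℝ)) (L : List V) : Prop :=
  ∃ ε > (0 : ℝ), ∃ R ∈ S, ∀ R', Perturb ε R R' → T.IsFlowPath R' L

/-- State of the sweep-plane minimum-removal algorithm. -/
structure SweepState (V : Type) where
  discovered : Set V
  final : V → Option ℝ
  proxies : Set V

def pendingS (st : SweepState V) (v : V) : Prop :=
  v ∈ st.discovered ∧ st.final v = none

/-- Pending component of `v`. -/
def pendComp (T : ImpTerrain V) (st : SweepState V) (v : V) : Set V :=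
  {u | Relation.ReflTransGen (fun a b => T.adj a b ∧ pendingS st a ∧ pendingS st b) v u}

/-- One step of the sweep algorithm, processing a `low` event `(v, false)` or a
`high` event `(v, true)`. -/
noncomputable def sweepStep (T : ImpTerrain V) (st : SweepState V) : V × Bool → SweepState V
  | (v, false) =>
    let st1 : SweepState V := ⟨insert v st.discovered, st.final, st.proxies⟩
    if ∃ u, T.adj v u ∧ (st.final u).isSome = true then
      ⟨st1.discovered,
        fun w => if w ∈ T.pendComp st1 v then some (T.low v) else st.final w,
        st.proxies⟩
    else st1
  | (v, true) =>
    if (st.final v).isSome = true then st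
    else
      ⟨st.discovered,
        fun w =>
          if w ∈ T.pendComp st v then some (sSup (T.low '' T.pendComp st v))
          else st.final w,
        insert v st.proxies⟩

noncomputable def sweepRun (T : ImpTerrain V) (evs : List (V × Bool)) : SweepState V :=
  evs.foldl T.sweepStep ⟨∅, fun _ => none, ∅⟩

/-- Elevation key of an event. -/
def eKey (T : ImpTerrain V) : V × Bool → ℝ
  | (v, false) => T.low v
  | (v, true) => T.high v

/-- A valid event list: all events, each once, sorted by elevation with low
events before high events at equal elevation. -/
def ValidEventList (T : ImpTerrain V) (evs : List (V × Bool)) : Prop :=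
  (∀ v : V, ∀ b : Bool, (v, b) ∈ evs) ∧ evs.Nodup ∧
    evs.Pairwise (fun e1 e2 =>
      T.eKey e1 < T.eKey e2 ∨ (T.eKey e1 = T.eKey e2 ∧ ¬(e1.2 = true ∧ e2.2 = false)))

/-- The realization `M` computed by the sweep algorithm. -/
noncomputable def sweepM (T : ImpTerrain V) (evs : List (V × Bool)) : V → ℝ :=
  fun v => ((T.sweepRun evs).final v).getD (T.high v)

end ImpTerrain

/-!
Lowering a single node `v` can only divert water towards `v`: afterwards, a flow from `x` to `y`
either survives or water from `x` reaches `v`. The delicate case is a plateau minimum next to `v`,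
which either persists or spills into `v`. Now let water flow from `x` to `p` in `R` and from `p`
to `q` in `R⁻`. Lowering the nodes of the second flow one after another, water from `x` reaches
each of them in turn: a flow step of `R⁻` between two nodes at their lowest elevations survives
in every realization, because all competing slopes only get shallower.
-/

open Function

namespace ImpTerrain

variable {V : Type} [Fintype V] [DecidableEq V] {T : ImpTerrain V}
  {R R' : V → ℝ} {P : Set V} {p q v x y : V} {c : ℝ}

theorem ne_of_adj (h : T.adj p q) : p ≠ q := by
  rintro rfl
  exact T.adj_irrefl p h

theorem hdist_pos (h : T.adj p q) : 0 < T.hdist p q :=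
  dist_pos.2 fun he => ne_of_adj h (T.posInj he)

theorem slope_nonneg (h : T.adj p q) (hle : R q ≤ R p) : 0 ≤ T.slope R p q :=
  div_nonneg (sub_nonneg.2 hle) (hdist_pos h).le

theorem slope_neg (h : T.adj p q) (hlt : R p < R q) : T.slope R p q < 0 :=
  div_neg_of_neg_of_pos (sub_neg.2 hlt) (hdist_pos h)

theorem slope_le_slope (h : T.adj p q) (hle : R p - R q ≤ R' p - R' q) :
    T.slope R p q ≤ T.slope R' p q :=
  div_le_div_of_nonneg_right hle (hdist_pos h).le

theorem slope_eq_zero (h : R p = R q) : T.slope R p q = 0 := by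
  rw [slope, h, sub_self, zero_div]

namespace LocalMin

theorem flowsTo (hP : T.LocalMin R P) (hp : p ∈ P) (hq : q ∈ P) : T.FlowsTo R p q :=
  Relation.ReflTransGen.mono (fun _ _ h => Or.inl ⟨P, hP, h.2.1, h.2.2, h.1⟩) _ _
    (hP.2.1 p hp q hq)

theorem slope_nonpos (hP : T.LocalMin R P) (hp : p ∈ P) (hq : T.adj p q) :
    T.slope R p q ≤ 0 := by
  by_cases hqP : q ∈ P
  · exact (slope_eq_zero (hP.2.2.1 p hp q hqP)).le
  · exact (slope_neg hq (hP.2.2.2 p hp q ⟨hqP, p, hp, T.adj_symm p q hq⟩)).le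

theorem subset_of_mem {P' : Set V} (hP : T.LocalMin R P) (hP' : T.LocalMin R P')
    (hp : p ∈ P) (hp' : p ∈ P') : P ⊆ P' := by
  intro u hu
  have hpu := hP.2.1 p hp u hu
  clear hp hu
  revert hp'
  induction hpu using Relation.ReflTransGen.head_induction_on with
  | refl => exact id
  | @head a b hab _ ih =>
    intro ha'
    obtain ⟨hab, haP, hbP⟩ := hab
    refine ih (by_contra fun hbP' => ?_)
    have := hP'.2.2.2 a ha' b ⟨hbP', a, ha', T.adj_symm a b hab⟩
    linarith [hP.2.2.1 a haP b hbP]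

theorem of_le (hP : T.LocalMin R' P) (hle : R' ≤ R) (heq : Set.EqOn R' R P) :
    T.LocalMin R P := by
  refine ⟨hP.1, hP.2.1, fun u hu w hw => ?_, fun u hu t ht => ?_⟩
  · rw [← heq hu, ← heq hw]
    exact hP.2.2.1 u hu w hw
  · rw [← heq hu]
    exact (hP.2.2.2 u hu t ht).trans_le (hle t)

theorem of_update (hP : T.LocalMin (update R v c) P) (hc : c ≤ R v) (hvP : v ∉ P) :
    T.LocalMin R P :=
  hP.of_le (update_le_self_iff.2 hc) fun _ hu => update_of_ne (hu.ne_of_notMem hvP) _ _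

theorem update_of_notMem (hP : T.LocalMin R P) (hvP : v ∉ P)
    (hc : v ∈ T.Nbhd P → ∀ u ∈ P, R u < c) : T.LocalMin (update R v c) P := by
  have heq : ∀ u ∈ P, update R v c u = R u := fun u hu => update_of_ne (hu.ne_of_notMem hvP) _ _
  refine ⟨hP.1, hP.2.1, fun u hu w hw => ?_, fun u hu t ht => ?_⟩
  · rw [heq u hu, heq w hw]
    exact hP.2.2.1 u hu w hw
  · rw [heq u hu]
    rcases eq_or_ne t v with rfl | htv
    · rw [update_self]
      exact hc ht u hu
    · rw [update_of_ne htv]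
      exact hP.2.2.2 u hu t ht

end LocalMin

theorem FlowStep.sdn (h : T.FlowStep R p q) : T.SDN R p q := by
  rcases h with ⟨P, hP, hp, hq, hpq⟩ | ⟨-, h⟩
  · have h0 := slope_eq_zero (T := T) (hP.2.2.1 p hp q hq)
    exact ⟨hpq, h0.ge, fun r hr => h0 ▸ hP.slope_nonpos hp hr⟩
  · exact h

theorem FlowStep.of_le (h : T.FlowStep R p q) (hle : R ≤ R') (hp : R' p = R p)
    (hq : R' q = R q) : T.FlowStep R' p q := by
  obtain ⟨hpq, h0, hmax⟩ := h.sdn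
  have hslope : T.slope R' p q = T.slope R p q := by rw [slope, slope, hp, hq]
  by_cases hmin : T.InLocalMin R' p
  · obtain ⟨P, hP, hpP⟩ := hmin
    refine Or.inl ⟨P, hP, hpP, by_contra fun hqP => ?_, hpq⟩
    have hlt := hP.2.2.2 p hpP q ⟨hqP, p, hpP, T.adj_symm p q hpq⟩
    rw [hp, hq] at hlt
    exact (slope_neg hpq hlt).not_ge h0
  · refine Or.inr ⟨hmin, hpq, hslope ▸ h0, fun r hr => ?_⟩
    rw [hslope]
    exact (slope_le_slope hr (by rw [hp]; linarith [hle r])).trans (hmax r hr)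

theorem LocalMin.flowsTo_update_or_forall_flowStep (hP : T.LocalMin R P)
    (hv : v ∈ P ∪ T.Nbhd P) (hx : x ∈ P) (hxv : x ≠ v) (hc : c ≤ R x) :
    T.FlowsTo (update R v c) x v ∨
      (¬ T.adj x v ∧ ∀ y ∈ P, T.adj x y → T.FlowStep (update R v c) x y) := by
  have hR'P : ∀ a ∈ P, a ≠ v → update R v c a = R x := fun a ha hav =>
    (update_of_ne hav _ _).trans (hP.2.2.1 a ha x hx)
  have hslope : ∀ r, T.adj x r → r ≠ v → T.slope (update R v c) x r ≤ 0 := by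
    intro r hr hrv
    rw [slope, update_of_ne hxv, update_of_ne hrv]
    exact hP.slope_nonpos hx hr
  by_cases hmin : T.InLocalMin (update R v c) x
  · obtain ⟨P', hP', hxP'⟩ := hmin
    refine Or.inl (hP'.flowsTo hxP' (by_contra fun hvP' => ?_))
    have hcv : c ≤ R v := by
      obtain hvP | hvN := hv
      · exact hc.trans (hP.2.2.1 x hx v hvP).le
      · exact hc.trans (hP.2.2.2 x hx v hvN).le
    have hPP' : P ⊆ P' := hP.subset_of_mem (hP'.of_update hcv hvP') hx hxP'
    obtain hvP | ⟨-, t, ht, hvt⟩ := hv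
    · exact hvP' (hPP' hvP)
    · have hlt := hP'.2.2.2 x hxP' v ⟨hvP', t, hPP' ht, hvt⟩
      rw [update_of_ne hxv, update_self] at hlt
      exact hlt.not_ge hc
  by_cases hxv' : T.adj x v
  · have h0 : 0 ≤ T.slope (update R v c) x v :=
      slope_nonneg hxv' (by rw [update_of_ne hxv, update_self]; exact hc)
    refine Or.inl (.single (Or.inr ⟨hmin, hxv', h0, fun r hr => ?_⟩))
    rcases eq_or_ne r v with rfl | hrv
    · exact le_rfl
    · exact (hslope r hr hrv).trans h0
  · refine Or.inr ⟨hxv', fun y hy hxy => ?_⟩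
    have hyv : y ≠ v := by rintro rfl; exact hxv' hxy
    have h0 := slope_eq_zero (T := T) ((hR'P x hx hxv).trans (hR'P y hy hyv).symm)
    exact Or.inr ⟨hmin, hxy, h0.ge, fun r hr =>
      h0 ▸ hslope r hr (by rintro rfl; exact hxv' hr)⟩

theorem LocalMin.flowsTo_update (hP : T.LocalMin R P) (hv : v ∈ P ∪ T.Nbhd P) (hx : x ∈ P)
    (hc : c ≤ R x) : T.FlowsTo (update R v c) x v := by
  have hdrain : ∀ a ∈ P, a ≠ v → T.FlowsTo (update R v c) a v ∨
      (¬ T.adj a v ∧ ∀ b ∈ P, T.adj a b → T.FlowStep (update R v c) a b) := fun a ha hav =>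
    hP.flowsTo_update_or_forall_flowStep hv ha hav (hc.trans_eq (hP.2.2.1 x hx a ha))
  have hpropagate : ∀ a w, T.ConnIn P a w → T.FlowsTo (update R v c) w v →
      T.FlowsTo (update R v c) a v := by
    intro a w haw hw
    induction haw using Relation.ReflTransGen.head_induction_on with
    | refl => exact hw
    | @head a b hab _ ih =>
      obtain ⟨hab, ha, hb⟩ := hab
      rcases eq_or_ne a v with rfl | hav
      · exact .refl
      rcases hdrain a ha hav with h | ⟨-, h⟩
      · exact h
      · exact .head (h b hb hab) ih
  obtain hvP | ⟨hvP, t, ht, hvt⟩ := hv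
  · exact hpropagate x v (hP.2.1 x hx v hvP) .refl
  · have htv : t ≠ v := by rintro rfl; exact hvP ht
    refine hpropagate x t (hP.2.1 x hx t ht) ((hdrain t ht htv).resolve_right fun h => ?_)
    exact h.1 (T.adj_symm v t hvt)

theorem SDN.update_or (hc : c ≤ R v) (hxv : x ≠ v) (h : T.SDN R x y) :
    T.SDN (update R v c) x y ∨ T.SDN (update R v c) x v := by
  obtain ⟨hxy, h0, hmax⟩ := h
  have hsame : ∀ r, r ≠ v → T.slope (update R v c) x r = T.slope R x r := fun r hrv => by
    rw [slope, slope, update_of_ne hxv, update_of_ne hrv]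
  by_cases hsteep : T.adj x v ∧ T.slope R x y ≤ T.slope (update R v c) x v
  · refine Or.inr ⟨hsteep.1, h0.trans hsteep.2, fun r hr => ?_⟩
    rcases eq_or_ne r v with rfl | hrv
    · exact le_rfl
    · rw [hsame r hrv]
      exact (hmax r hr).trans hsteep.2
  · have hyv : y ≠ v := by
      rintro rfl
      refine hsteep ⟨hxy, slope_le_slope hxy ?_⟩
      rw [update_of_ne hxv, update_self]
      linarith
    refine Or.inl ⟨hxy, (hsame y hyv).symm ▸ h0, fun r hr => ?_⟩
    rw [hsame y hyv]
    rcases eq_or_ne r v with rfl | hrv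
    · exact (not_le.1 fun h => hsteep ⟨hr, h⟩).le
    · rw [hsame r hrv]
      exact hmax r hr

theorem FlowStep.update_or (hc : c ≤ R v) (h : T.FlowStep R x y) :
    T.FlowsTo (update R v c) x y ∨ T.FlowsTo (update R v c) x v := by
  rcases eq_or_ne x v with rfl | hxv
  · exact Or.inr .refl
  rcases h with ⟨P, hP, hx, hy, hxy⟩ | ⟨hmin, hsdn⟩
  · by_cases hspill : v ∈ P ∨ (v ∈ T.Nbhd P ∧ c ≤ R x)
    · refine Or.inr (hP.flowsTo_update (hspill.imp_right And.left) hx ?_)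
      exact hspill.elim (fun hvP => hc.trans (hP.2.2.1 v hvP x hx).le) And.right
    · push Not at hspill
      refine Or.inl (.single (Or.inl ⟨P, hP.update_of_notMem hspill.1 ?_, hx, hy, hxy⟩))
      exact fun hvN u hu => (hP.2.2.1 u hu x hx).trans_lt (hspill.2 hvN)
  · by_cases hmin' : T.InLocalMin (update R v c) x
    · obtain ⟨P, hP, hxP⟩ := hmin'
      exact Or.inr (hP.flowsTo hxP (by_contra fun hvP => hmin ⟨P, hP.of_update hc hvP, hxP⟩))
    · exact (hsdn.update_or hc hxv).imp (fun h => .single (Or.inr ⟨hmin', h⟩))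
        (fun h => .single (Or.inr ⟨hmin', h⟩))

theorem FlowsTo.update_or (hc : c ≤ R v) (h : T.FlowsTo R x y) :
    T.FlowsTo (update R v c) x y ∨ T.FlowsTo (update R v c) x v := by
  induction h using Relation.ReflTransGen.head_induction_on with
  | refl => exact Or.inl .refl
  | head hstep _ ih =>
    rcases hstep.update_or hc with h | h
    · exact ih.imp h.trans h.trans
    · exact Or.inr h

theorem FlowsTo.exists_trans_of_le {R₀ : V → ℝ} (hxp : T.FlowsTo R x p)
    (hpq : T.FlowsTo R₀ p q) (hR₀ : R₀ ≤ R) :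
    ∃ R', R₀ ≤ R' ∧ R' ≤ R ∧ R' q = R₀ q ∧ T.FlowsTo R' x q := by
  induction hpq with
  | refl =>
    refine ⟨update R p (R₀ p), le_update_iff.2 ⟨le_rfl, fun w _ => hR₀ w⟩,
      update_le_self_iff.2 (hR₀ p), update_self _ _ _, ?_⟩
    exact (hxp.update_or (hR₀ p)).elim id id
  | @tail b c _ hbc ih =>
    obtain ⟨R', hR₀R', hR'R, hR'b, hxb⟩ := ih
    have hcb : b ≠ c := ne_of_adj hbc.sdn.1
    refine ⟨update R' c (R₀ c), le_update_iff.2 ⟨le_rfl, fun w _ => hR₀R' w⟩,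
      (update_le_self_iff.2 (hR₀R' c)).trans hR'R, update_self _ _ _, ?_⟩
    refine (hxb.update_or (hR₀R' c)).elim (fun h => h.tail ?_) id
    exact hbc.of_le (le_update_iff.2 ⟨le_rfl, fun w _ => hR₀R' w⟩)
      ((update_of_ne hcb _ _).trans hR'b) (update_self _ _ _)

end ImpTerrain

theorem stmt6_general {V : Type} [Fintype V] [DecidableEq V] (T : ImpTerrain V)
    (Q P : Set V)
    (hP : P ⊆ T.WS T.low Q) :
    T.PoWS P ⊆ T.PoWS Q := by
  rintro x ⟨R, hR, p, hpP, hxp⟩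
  obtain ⟨q, hqQ, hpq⟩ := hP hpP
  obtain ⟨R', hlowR', hR'R, -, hxq⟩ := hxp.exists_trans_of_le hpq fun v => (hR v).1
  exact ⟨R', fun v => ⟨hlowR' v, (hR'R v).trans (hR v).2⟩, q, hqQ, hxq⟩

/-- If `P` is contained in the watershed of `Q` in the lowermost realization,
then the potential watershed of `P` is contained in that of `Q`. -/
theorem stmt6 {V : Type} [Fintype V] [DecidableEq V] (T : ImpTerrain V)
    (hle : ∀ v, T.low v ≤ T.high v) (Q P : Set V)
    (hP : P ⊆ T.WS T.low Q) :
    T.PoWS P ⊆ T.PoWS Q :=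
  stmt6_general T Q P hP
end

section
/- For any set of nodes Q of an imprecise terrain, if p ∈ WS(R⁻,Q) then PoWS(p) ⊆ PoWS(Q); however, in general p ∈ PoWS(q) does not imply PoWS(p) ⊆ PoWS(q). -/
open scoped Classical
open Set

namespace ImpTerrain

variable {V : Type} [Fintype V] [DecidableEq V]

lemma hdist_pos_s16 (T : ImpTerrain V) {u v : V} (h : T.adj u v) : 0 < T.hdist u v := by
  have hne : u ≠ v := by rintro rfl; exact T.adj_irrefl u h
  exact dist_pos.mpr fun he => hne (T.posInj he)

lemma slope_nonneg_iff (T : ImpTerrain V) {R : V → ℝ} {u v : V} (h : T.adj u v) :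
    0 ≤ T.slope R u v ↔ R v ≤ R u := by
  have hd := T.hdist_pos_s16 h
  unfold slope
  rw [le_div_iff₀ hd, zero_mul]
  constructor <;> intro <;> linarith

lemma slope_pos_lt (T : ImpTerrain V) {R : V → ℝ} {u v : V} (h : T.adj u v)
    (h' : 0 < T.slope R u v) : R v < R u := by
  have hd := T.hdist_pos_s16 h
  unfold slope at h'
  rw [lt_div_iff₀ hd, zero_mul] at h'
  linarith

lemma slope_mono (T : ImpTerrain V) {R1 R2 : V → ℝ} {u r : V} (h : T.adj u r)
    (hu : R1 u ≤ R2 u) (hr : R2 r ≤ R1 r) : T.slope R1 u r ≤ T.slope R2 u r := by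
  have hd := T.hdist_pos_s16 h
  unfold slope
  rw [div_le_div_iff₀ hd hd]
  nlinarith

lemma WS_head (T : ImpTerrain V) {R : V → ℝ} {Q : Set V} {u w : V}
    (h : T.FlowStep R u w) (hw : w ∈ T.WS R Q) : u ∈ T.WS R Q := by
  obtain ⟨q, hq, hf⟩ := hw
  exact ⟨q, hq, Relation.ReflTransGen.head h hf⟩

/-- key step lemma -/
lemma step_general (T : ImpTerrain V) {R' : V → ℝ} {Q : Set V} {u u' : V}
    (h1 : T.adj u u') (h2 : R' u' ≤ R' u) (h3 : u' ∈ T.WS R' Q)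
    (h4 : ∀ r, T.adj u r → T.slope R' u u' < T.slope R' u r → r ∈ T.WS R' Q) :
    u ∈ T.WS R' Q := by
  by_cases hlm : T.InLocalMin R' u
  · obtain ⟨P, hP, huP⟩ := hlm
    have hu' : u' ∈ P := by
      by_contra hn
      have hnb : u' ∈ T.Nbhd P := ⟨hn, u, huP, T.adj_symm u u' h1⟩
      exact absurd (hP.2.2.2 u huP u' hnb) (not_lt.mpr h2)
    exact T.WS_head (Or.inl ⟨P, hP, huP, hu', h1⟩) h3
  · have hne : (Finset.univ.filter (fun r => T.adj u r)).Nonempty :=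
      ⟨u', by simp [h1]⟩
    obtain ⟨rs, hrsmem, hrsmax⟩ := Finset.exists_max_image _ (fun r => T.slope R' u r) hne
    have hrsadj : T.adj u rs := by simpa using hrsmem
    have hmax : ∀ r, T.adj u r → T.slope R' u r ≤ T.slope R' u rs := fun r hr =>
      hrsmax r (by simp [hr])
    have hs0 : 0 ≤ T.slope R' u u' := (T.slope_nonneg_iff h1).mpr h2
    by_cases hcmp : T.slope R' u rs ≤ T.slope R' u u'
    · have hsdn : T.SDN R' u u' := ⟨h1, hs0, fun r hr => le_trans (hmax r hr) hcmp⟩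
      exact T.WS_head (Or.inr ⟨hlm, hsdn⟩) h3
    · push_neg at hcmp
      have hrW := h4 rs hrsadj hcmp
      have hsdn : T.SDN R' u rs := ⟨hrsadj, le_trans hs0 (le_of_lt hcmp), hmax⟩
      exact T.WS_head (Or.inr ⟨hlm, hsdn⟩) hrW

/-- The realization obtained from `R` by lowering every node of `WS(low, Q)` to its `low`. -/
noncomputable def lowered (T : ImpTerrain V) (Q : Set V) (R : V → ℝ) : V → ℝ :=
  fun v => if v ∈ T.WS T.low Q then T.low v else R v

section Lowered

variable (T : ImpTerrain V) (Q : Set V) (R : V → ℝ)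

lemma lowered_eq_low {v : V} (hv : v ∈ T.WS T.low Q) : T.lowered Q R v = T.low v :=
  if_pos hv

lemma lowered_eq {v : V} (hv : v ∉ T.WS T.low Q) : T.lowered Q R v = R v := if_neg hv

variable {R} (hR : T.IsRealization R)
include hR

lemma low_le_lowered (v : V) : T.low v ≤ T.lowered Q R v := by
  unfold lowered; split
  · exact le_refl _
  · exact (hR v).1

lemma lowered_le (v : V) : T.lowered Q R v ≤ R v := by
  unfold lowered; split
  · exact (hR v).1
  · exact le_refl _

lemma lowered_real (hlh : ∀ v, T.low v ≤ T.high v) : T.IsRealization (T.lowered Q R) :=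
  fun v => ⟨T.low_le_lowered Q hR v, by
    unfold lowered; split
    · exact hlh v
    · exact (hR v).2⟩

/-- Claim 1: the lowermost watershed is inside the watershed of the lowered realization. -/
lemma claim1 : T.WS T.low Q ⊆ T.WS (T.lowered Q R) Q := by
  intro v hv
  obtain ⟨q, hq, hflow⟩ := hv

  induction hflow using Relation.ReflTransGen.head_induction_on with
  | refl => exact ⟨q, hq, Relation.ReflTransGen.refl⟩
  | @head a c hstep htail ih =>
    have haS : a ∈ T.WS T.low Q := ⟨q, hq, Relation.ReflTransGen.head hstep htail⟩
    have hcS : c ∈ T.WS T.low Q := ⟨q, hq, htail⟩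
    -- extract facts from the low-flow step
    have hfacts : T.adj a c ∧ T.low c ≤ T.low a ∧
        ∀ r, T.adj a r → T.slope T.low a r ≤ T.slope T.low a c := by
      rcases hstep with ⟨P, hP, haP, hcP, hadj⟩ | ⟨_, hsdn⟩
      · have hflat := hP.2.2.1 a haP c hcP
        refine ⟨hadj, le_of_eq hflat.symm, fun r hr => ?_⟩
        have hsac : T.slope T.low a c = 0 := by
          unfold slope; rw [hflat]; simp
        by_cases hrP : r ∈ P
        · have := hP.2.2.1 a haP r hrP
          rw [hsac]; unfold slope; rw [this]; simp
        · have hnb : r ∈ T.Nbhd P := ⟨hrP, a, haP, T.adj_symm a r hr⟩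
          have hlt := hP.2.2.2 a haP r hnb
          rw [hsac]
          have hd := T.hdist_pos_s16 hr
          unfold slope
          rw [div_nonpos_iff]
          right; constructor <;> linarith
      · exact ⟨hsdn.1, (T.slope_nonneg_iff hsdn.1).mp hsdn.2.1, hsdn.2.2⟩
    obtain ⟨hadj, hle, hmax⟩ := hfacts
    refine T.step_general hadj ?_ ih ?_
    · rw [T.lowered_eq_low Q R haS, T.lowered_eq_low Q R hcS]; exact hle
    · intro r hr hgt
      exfalso
      have e1 : T.slope (T.lowered Q R) a c = T.slope T.low a c := by
        unfold slope
        rw [T.lowered_eq_low Q R haS, T.lowered_eq_low Q R hcS]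
      have e2 : T.slope (T.lowered Q R) a r ≤ T.slope T.low a r :=
        T.slope_mono hr (le_of_eq (T.lowered_eq_low Q R haS)) (T.low_le_lowered Q hR r)
      have := hmax r hr
      rw [e1] at hgt
      linarith

/-- plateau walk inside a local minimum of `R`. -/
lemma plateau_walk {P : Set V} (hP : T.LocalMin R P) {c : V}
    (hcW : c ∈ T.WS (T.lowered Q R) Q) :
    ∀ u, T.ConnIn P u c → u ∈ T.WS (T.lowered Q R) Q := by
  intro u hconn
  induction hconn using Relation.ReflTransGen.head_induction_on with
  | refl => exact hcW
  | @head a b hstep _ ih =>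
    obtain ⟨hadj, haP, hbP⟩ := hstep
    by_cases haS : a ∈ T.WS T.low Q
    · exact T.claim1 Q hR haS
    · have hflat := hP.2.2.1 a haP b hbP
      have hRa : T.lowered Q R a = R a := T.lowered_eq Q R haS
      refine T.step_general hadj ?_ ih ?_
      · calc T.lowered Q R b ≤ R b := T.lowered_le Q hR b
          _ = R a := hflat.symm
          _ = T.lowered Q R a := hRa.symm
      · intro r hr hgt
        have hs0 : 0 ≤ T.slope (T.lowered Q R) a b := by
          refine (T.slope_nonneg_iff hadj).mpr ?_
          calc T.lowered Q R b ≤ R b := T.lowered_le Q hR b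
            _ = R a := hflat.symm
            _ = T.lowered Q R a := hRa.symm
        have hlt : T.lowered Q R r < T.lowered Q R a :=
          T.slope_pos_lt hr (lt_of_le_of_lt hs0 hgt)
        have hrS : r ∈ T.WS T.low Q := by
          by_contra hrS
          have hRr : T.lowered Q R r = R r := T.lowered_eq Q R hrS
          rw [hRr, hRa] at hlt
          by_cases hrP : r ∈ P
          · exact absurd (hP.2.2.1 a haP r hrP) (ne_of_gt hlt)
          · exact absurd (hP.2.2.2 a haP r ⟨hrP, a, haP, T.adj_symm a r hr⟩)
              (not_lt.mpr (le_of_lt hlt))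
        exact T.claim1 Q hR hrS

/-- Main step lemma -/
lemma mainstep {a b : V} (hstep : T.FlowStep R a b)
    (hb : b ∈ T.WS (T.lowered Q R) Q) : a ∈ T.WS (T.lowered Q R) Q := by
  by_cases haS : a ∈ T.WS T.low Q
  · exact T.claim1 Q hR haS
  · rcases hstep with ⟨P, hP, haP, hbP, hadj⟩ | ⟨hnl, hsdn⟩
    · exact T.plateau_walk Q hR hP hb a (hP.2.1 a haP b hbP)
    · have hRa : T.lowered Q R a = R a := T.lowered_eq Q R haS
      refine T.step_general hsdn.1 ?_ hb ?_
      · calc T.lowered Q R b ≤ R b := T.lowered_le Q hR b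
          _ ≤ R a := (T.slope_nonneg_iff hsdn.1).mp hsdn.2.1
          _ = T.lowered Q R a := hRa.symm
      · intro r hr hgt
        have hrS : r ∈ T.WS T.low Q := by
          by_contra hrS
          have e1 : T.slope (T.lowered Q R) a r = T.slope R a r := by
            unfold slope; rw [hRa, T.lowered_eq Q R hrS]
          have e2 : T.slope R a b ≤ T.slope (T.lowered Q R) a b :=
            T.slope_mono hsdn.1 (le_of_eq hRa.symm) (T.lowered_le Q hR b)
          have := hsdn.2.2 r hr
          rw [e1] at hgt
          linarith
        exact T.claim1 Q hR hrS

end Lowered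

theorem positive_claim (T : ImpTerrain V) (hlh : ∀ v, T.low v ≤ T.high v)
    (Q P : Set V) (hPQ : P ⊆ T.WS T.low Q) : T.PoWS P ⊆ T.PoWS Q := by
  rintro x ⟨R, hR, p, hpP, hflow⟩
  refine ⟨T.lowered Q R, T.lowered_real Q hR hlh, ?_⟩
  induction hflow using Relation.ReflTransGen.head_induction_on with
  | refl => exact T.claim1 Q hR (hPQ hpP)
  | head hstep _ ih => exact T.mainstep Q hR hstep ih

end ImpTerrain
namespace CounterEx

open ImpTerrain

/-- The counterexample terrain on 3 vertices 0 — 1 — 2 on a line. -/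
noncomputable def T2 : ImpTerrain (Fin 3) where
  pos := fun v => (![0, 10, 11] v, 0)
  posInj := by
    intro a b h
    have h1 : (![0, 10, 11] : Fin 3 → ℝ) a = ![0, 10, 11] b := congrArg Prod.fst h
    fin_cases a <;> fin_cases b <;> simp_all <;> norm_num at h1
  adj := fun u v => u.val + 1 = v.val ∨ v.val + 1 = u.val
  adj_symm := fun u v h => h.symm
  adj_irrefl := fun v h => by omega
  low := ![0, -1, 1]
  high := ![0, 2, 1]

lemma adj01 : T2.adj 0 1 := Or.inl rfl
lemma adj12 : T2.adj 1 2 := Or.inl rfl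

lemma adj0 {w : Fin 3} (h : T2.adj 0 w) : w = 1 := by
  fin_cases w <;> simp_all [T2] <;> omega

lemma adj1 {w : Fin 3} (h : T2.adj 1 w) : w = 0 ∨ w = 2 := by
  fin_cases w <;> simp_all [T2] <;> omega

lemma hd01 : T2.hdist 0 1 = 10 := by
  simp [T2, ImpTerrain.hdist, Prod.dist_eq, Real.dist_eq]

lemma hd10 : T2.hdist 1 0 = 10 := by
  simp [T2, ImpTerrain.hdist, Prod.dist_eq, Real.dist_eq]

lemma hd12 : T2.hdist 1 2 = 1 := by
  simp [T2, ImpTerrain.hdist, Prod.dist_eq, Real.dist_eq]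
  norm_num

lemma low_vals : T2.low 0 = 0 ∧ T2.low 1 = -1 ∧ T2.low 2 = 1 := by
  refine ⟨?_, ?_, ?_⟩ <;> simp [T2]

lemma high_vals : T2.high 0 = 0 ∧ T2.high 1 = 2 ∧ T2.high 2 = 1 := by
  refine ⟨?_, ?_, ?_⟩ <;> simp [T2]

lemma low_le_high : ∀ v, T2.low v ≤ T2.high v := by
  intro v; fin_cases v <;> simp [T2] <;> norm_num

/-- In the realization with p at elevation 2, p flows to q. -/
lemma p_in_PoWS_q : (1 : Fin 3) ∈ T2.PoWS {2} := by
  refine ⟨![0, 2, 1], ?_, 2, rfl, ?_⟩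
  · intro v; fin_cases v <;> simp [T2] <;> norm_num
  · refine Relation.ReflTransGen.single (Or.inr ⟨?_, adj12, ?_, ?_⟩)
    · rintro ⟨P, hP, h1P⟩
      have h0P : (0 : Fin 3) ∉ P := by
        intro h0
        have := hP.2.2.1 (0 : Fin 3) h0 1 h1P
        norm_num at this
      have hnb : (0 : Fin 3) ∈ T2.Nbhd P := ⟨h0P, 1, h1P, adj01⟩
      have := hP.2.2.2 1 h1P 0 hnb
      norm_num at this
    · rw [ImpTerrain.slope, hd12]; norm_num [Matrix.cons_val_two, Matrix.tail_cons, Matrix.head_cons]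
    · intro r hr
      rcases adj1 hr with rfl | rfl
      · rw [ImpTerrain.slope, ImpTerrain.slope, hd12, hd10]; norm_num [Matrix.cons_val_two, Matrix.tail_cons, Matrix.head_cons]
      · exact le_refl _

/-- In the realization with p at elevation -1, x flows to p. -/
lemma x_in_PoWS_p : (0 : Fin 3) ∈ T2.PoWS {1} := by
  refine ⟨![0, -1, 1], ?_, 1, rfl, ?_⟩
  · intro v; fin_cases v <;> simp [T2] <;> norm_num
  · refine Relation.ReflTransGen.single (Or.inr ⟨?_, adj01, ?_, ?_⟩)
    · rintro ⟨P, hP, h0P⟩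
      have h1P : (1 : Fin 3) ∉ P := by
        intro h1
        have := hP.2.2.1 (0 : Fin 3) h0P 1 h1
        norm_num at this
      have hnb : (1 : Fin 3) ∈ T2.Nbhd P := ⟨h1P, 0, h0P, T2.adj_symm 0 1 adj01⟩
      have := hP.2.2.2 0 h0P 1 hnb
      norm_num at this
    · rw [ImpTerrain.slope, hd01]; norm_num
    · intro r hr
      rw [adj0 hr]

/-- x never reaches q in any realization. -/
lemma x_notin_PoWS_q : (0 : Fin 3) ∉ T2.PoWS {2} := by
  rintro ⟨R, hR, q, hq, hflow⟩
  rw [Set.mem_singleton_iff] at hq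
  subst hq
  have hR0 : R 0 = 0 := by
    have h := hR 0; simp [T2] at h; linarith [h.1, h.2]
  have hR2 : R 2 = 1 := by
    have h := hR 2; simp [T2] at h; linarith [h.1, h.2]
  -- invariant
  have key : ∀ u w : Fin 3, T2.FlowStep R u w →
      (u = 0 ∨ (u = 1 ∧ R 1 ≤ 0)) → (w = 0 ∨ (w = 1 ∧ R 1 ≤ 0)) := by
    intro u w hstep hu
    have hadj : T2.adj u w := by
      rcases hstep with ⟨P, _, _, _, h⟩ | ⟨_, h⟩
      · exact h
      · exact h.1
    rcases hu with rfl | ⟨rfl, ht⟩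
    · have hw : w = 1 := adj0 hadj
      subst hw
      refine Or.inr ⟨rfl, ?_⟩
      rcases hstep with ⟨P, hP, h0P, h1P, _⟩ | ⟨_, hsdn⟩
      · have := hP.2.2.1 (0 : Fin 3) h0P 1 h1P
        linarith
      · have := (T2.slope_nonneg_iff adj01).mp hsdn.2.1
        linarith
    · rcases adj1 hadj with rfl | rfl
      · exact Or.inl rfl
      · exfalso
        rcases hstep with ⟨P, hP, h1P, h2P, _⟩ | ⟨_, hsdn⟩
        · have := hP.2.2.1 (1 : Fin 3) h1P 2 h2P
          linarith
        · have := (T2.slope_nonneg_iff adj12).mp hsdn.2.1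
          linarith
  have hΦ : ∀ w : Fin 3, T2.FlowsTo R 0 w → (w = 0 ∨ (w = 1 ∧ R 1 ≤ 0)) := by
    intro w h
    induction h with
    | refl => exact Or.inl rfl
    | tail _ hbc ih => exact key _ _ hbc ih
  rcases hΦ 2 hflow with h | ⟨h, _⟩ <;> exact absurd h (by decide)

end CounterEx

/-- Positive claim: if `p ∈ WS(R⁻, Q)` then `PoWS(p) ⊆ PoWS(Q)` (more
generally for `P ⊆ WS(R⁻,Q)`). Negative claim: in general `p ∈ PoWS(q)` does
not imply `PoWS(p) ⊆ PoWS(q)`. -/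
theorem stmt16 :
    (∀ (V : Type) (_ : Fintype V) (_ : DecidableEq V) (T : ImpTerrain V),
      (∀ v, T.low v ≤ T.high v) → ∀ Q P : Set V,
        P ⊆ T.WS T.low Q → T.PoWS P ⊆ T.PoWS Q) ∧
    (∃ (n : ℕ) (T : ImpTerrain (Fin n)),
      (∀ v, T.low v ≤ T.high v) ∧
      ∃ p q : Fin n, p ∈ T.PoWS {q} ∧ ¬ T.PoWS {p} ⊆ T.PoWS {q}) := by
  constructor
  · intro V _ _ T hlh Q P hPQ
    exact T.positive_claim hlh Q P hPQ
  · exact ⟨3, CounterEx.T2, CounterEx.low_le_high, 1, 2, CounterEx.p_in_PoWS_q,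
      fun h => CounterEx.x_notin_PoWS_q (h CounterEx.x_in_PoWS_p)⟩
end
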